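/- arXiv:1410.6553 — 3 statements merged into one kernel-verified Lean document; each statement's English description precedes it below -/
import Mathlib

section
/- Let $w\in\mathbb{C}\setminus\{0\}$ and let $B$ be a finite Blaschke product whose zeros $a_1,\dots,a_n$ are all nonzero, and suppose $B'(a_j)\neq 0$ for all $j$ and $B'(0)\neq 0$. Then $w$ is a zero of $B'$ if and only if $1/\bar{w}$ is a zero of $B'$ (i.e., the zero set of $B'$ in $\mathbb{C}\setminus\{0\}$ is symmetric with respect to the unit circle). -/
/-!
Off the zeros and poles, `B' = B · L` with the logarithmic derivative
`L z = ∑ⱼ (1 - |aⱼ|²) / ((z - aⱼ)(1 - conj aⱼ · z))`, and `B` has no zeros there. Each summand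
satisfies `conj (L (1 / conj w)) = w² L w`, so `L` vanishes at `w` iff it vanishes at the
reflection `1 / conj w`.
-/

open Complex Finset ComplexConjugate

lemma deriv_eq_zero_iff_logDeriv_eq_zero {𝕜 𝕜' : Type*} [NontriviallyNormedField 𝕜]
    [NontriviallyNormedField 𝕜'] [NormedAlgebra 𝕜 𝕜'] {f : 𝕜 → 𝕜'} {x : 𝕜} (hf : f x ≠ 0) :
    deriv f x = 0 ↔ logDeriv f x = 0 := by
  rw [logDeriv_apply, div_eq_zero_iff, or_iff_left hf]

noncomputable def mobiusLogDeriv (a z : ℂ) : ℂ :=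
  (1 - conj a * a) / ((z - a) * (1 - conj a * z))

lemma logDeriv_mobius {a z : ℂ} (hz : z ≠ a) (hden : 1 - conj a * z ≠ 0) :
    logDeriv (fun z => (z - a) / (1 - conj a * z)) z = mobiusLogDeriv a z := by
  have hnum : z - a ≠ 0 := sub_ne_zero.mpr hz
  have hdiv := logDeriv_div (f := fun z => z - a) (g := fun z => 1 - conj a * z) z hnum hden
    (by fun_prop) (by fun_prop)
  have hnum' : deriv (fun z => z - a) z = 1 := by simp
  have hden' : deriv (fun z => 1 - conj a * z) z = -conj a := by simp
  rw [hdiv, logDeriv_apply, logDeriv_apply, hnum', hden', mobiusLogDeriv,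
    div_sub_div _ _ hnum hden]
  ring

lemma conj_mobiusLogDeriv_reflect (a : ℂ) {w : ℂ} (hw : w ≠ 0) :
    conj (mobiusLogDeriv a (1 / conj w)) = w ^ 2 * mobiusLogDeriv a w := by
  have hw' : conj w ≠ 0 := by simpa using hw
  have hden : (1 / conj w - a) * (1 - conj a * (1 / conj w)) =
      (1 - a * conj w) * (conj w - conj a) / conj w ^ 2 := by
    field_simp
  rw [mobiusLogDeriv, hden, div_div_eq_mul_div, mobiusLogDeriv]
  simp only [map_div₀, map_mul, map_sub, map_one, map_pow, conj_conj]
  ring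

lemma sum_mobiusLogDeriv_reflect_eq_zero_iff {ι : Type*} (s : Finset ι) (a : ι → ℂ) {w : ℂ}
    (hw : w ≠ 0) :
    ∑ j ∈ s, mobiusLogDeriv (a j) (1 / conj w) = 0 ↔ ∑ j ∈ s, mobiusLogDeriv (a j) w = 0 := by
  rw [← map_eq_zero (starRingEnd ℂ), map_sum,
    sum_congr rfl fun j _ => conj_mobiusLogDeriv_reflect (a j) hw, ← mul_sum,
    mul_eq_zero_iff_left (pow_ne_zero 2 hw)]

lemma logDeriv_blaschke {n : ℕ} {c : ℂ} (hc : c ≠ 0) (a : Fin n → ℂ) {z : ℂ}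
    (hz : ∀ j, z ≠ a j) (hden : ∀ j, 1 - conj (a j) * z ≠ 0) :
    logDeriv (fun z => c * ∏ j, (z - a j) / (1 - conj (a j) * z)) z =
      ∑ j, mobiusLogDeriv (a j) z := by
  rw [logDeriv_const_mul z c hc, logDeriv_prod]
  · exact sum_congr rfl fun j _ => logDeriv_mobius (hz j) (hden j)
  · exact fun j _ => div_ne_zero (sub_ne_zero.mpr (hz j)) (hden j)
  · intro j _
    exact (differentiableAt_id.sub_const _).div (by fun_prop) (hden j)

lemma blaschke_ne_zero {n : ℕ} {c : ℂ} (hc : c ≠ 0) (a : Fin n → ℂ) {z : ℂ}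
    (hz : ∀ j, z ≠ a j) (hden : ∀ j, 1 - conj (a j) * z ≠ 0) :
    c * ∏ j, (z - a j) / (1 - conj (a j) * z) ≠ 0 :=
  mul_ne_zero hc <| prod_ne_zero_iff.mpr fun j _ =>
    div_ne_zero (sub_ne_zero.mpr (hz j)) (hden j)

theorem blaschke_deriv_zeros_symmetric_general (n : ℕ) (c : ℂ) (hc : ‖c‖ = 1)
    (a : Fin n → ℂ)
    (B : ℂ → ℂ)
    (hB : B = fun z => c * ∏ j, (z - a j) / (1 - (starRingEnd ℂ) (a j) * z))
    (w : ℂ) (hw : w ≠ 0)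
    (hwz : ∀ j, w ≠ a j) (hwp : ∀ j, (starRingEnd ℂ) (a j) * w ≠ 1) :
    deriv B w = 0 ↔ deriv B (1 / (starRingEnd ℂ) w) = 0 := by
  have hc0 : c ≠ 0 := by rintro rfl; simp at hc
  have hden : ∀ j, 1 - conj (a j) * w ≠ 0 := fun j => sub_ne_zero.mpr (hwp j).symm
  have hw' : ∀ j, 1 / conj w ≠ a j := fun j h => hden j <| by
    rw [← h, map_div₀, map_one, conj_conj]; field_simp; ring
  have hden' : ∀ j, 1 - conj (a j) * (1 / conj w) ≠ 0 := fun j h => hwz j <| by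
    have hw0 : conj w ≠ 0 := by simpa using hw
    field_simp at h
    simpa [sub_eq_zero] using congrArg conj h
  have hBw : B w ≠ 0 := by rw [hB]; exact blaschke_ne_zero hc0 a hwz hden
  have hBw' : B (1 / conj w) ≠ 0 := by rw [hB]; exact blaschke_ne_zero hc0 a hw' hden'
  rw [deriv_eq_zero_iff_logDeriv_eq_zero hBw, deriv_eq_zero_iff_logDeriv_eq_zero hBw', hB,
    logDeriv_blaschke hc0 a hwz hden, logDeriv_blaschke hc0 a hw' hden',
    sum_mobiusLogDeriv_reflect_eq_zero_iff _ _ hw]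

/-- The zero set of `B'` in `ℂ \ {0}` (away from the poles of the rational function `B`)
is symmetric with respect to the unit circle. -/
theorem blaschke_deriv_zeros_symmetric (n : ℕ) (c : ℂ) (hc : ‖c‖ = 1)
    (a : Fin n → ℂ) (ha : ∀ j, ‖a j‖ < 1) (ha0 : ∀ j, a j ≠ 0)
    (B : ℂ → ℂ)
    (hB : B = fun z => c * ∏ j, (z - a j) / (1 - (starRingEnd ℂ) (a j) * z))
    (hBa : ∀ j, deriv B (a j) ≠ 0) (hB0 : deriv B 0 ≠ 0)
    (w : ℂ) (hw : w ≠ 0)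
    (hwz : ∀ j, w ≠ a j) (hwp : ∀ j, (starRingEnd ℂ) (a j) * w ≠ 1) :
    deriv B w = 0 ↔ deriv B (1 / (starRingEnd ℂ) w) = 0 :=
  blaschke_deriv_zeros_symmetric_general n c hc a B hB w hw hwz hwp
end

section
/- Let $\{z_n\}\subset\mathbb{D}$ be a sequence with $\mathrm{Im}\,z_n>0$, $z_n=r_ne^{i\varphi_n}$ with $\tfrac12\le r_n<1$ and $0<\varphi_n\le\tfrac{\pi}{2}$ for all $n$, and $\sum_n \frac{1-|z_n|^2}{|1-z_n|^2}<\infty$. Then for every $\zeta=e^{it}$ with $-\tfrac{\pi}{2}\le t<0$, $\sum_n \frac{1-|z_n|^2}{|\zeta-z_n|^2}\ \le\ \frac{\pi^2}{2}\sum_n \frac{1-|z_n|^2}{|1-z_n|^2}\ <\ \infty.$ -/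
/-!
For `|ζ| = 1` one has `|ζ - z|² - |1 - z|² = 2 Re z (1 - Re ζ) - 2 Im z Im ζ`, which is
nonnegative when `z` lies in the closed first quadrant and `ζ` in the closed lower half-plane.
Hence `|1 - z_n| ≤ |ζ - z_n|` for every `n`, so the series at `ζ` is dominated termwise by the
convergent series at `1`, and `1 ≤ π² / 2`.
-/

open Complex

theorem Complex.norm_sq_sub_sub_norm_sq_one_sub {ζ : ℂ} (hζ : ‖ζ‖ = 1) (z : ℂ) :
    ‖ζ - z‖ ^ 2 - ‖1 - z‖ ^ 2 = 2 * z.re * (1 - ζ.re) - 2 * z.im * ζ.im := by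
  have hζ_sq : ζ.re * ζ.re + ζ.im * ζ.im = 1 := by
    rw [← normSq_apply, ← Complex.sq_norm, hζ, one_pow]
  simp only [Complex.sq_norm, normSq_apply, sub_re, sub_im, one_re, one_im]
  linear_combination hζ_sq

theorem Complex.norm_one_sub_le_norm_sub {z ζ : ℂ} (hz_re : 0 ≤ z.re) (hz_im : 0 ≤ z.im)
    (hζ : ‖ζ‖ = 1) (hζ_im : ζ.im ≤ 0) : ‖1 - z‖ ≤ ‖ζ - z‖ := by
  have hζ_re : ζ.re ≤ 1 := hζ ▸ re_le_norm ζ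
  have h := norm_sq_sub_sub_norm_sq_one_sub hζ z
  refine (pow_le_pow_iff_left₀ (norm_nonneg _) (norm_nonneg _) two_ne_zero).1 ?_
  nlinarith [mul_nonneg hz_re (sub_nonneg.2 hζ_re), mul_nonneg hz_im (neg_nonneg.2 hζ_im)]

theorem Complex.re_ofReal_mul_exp_nonneg {r φ : ℝ} (hr : 0 ≤ r) (hφ₀ : -(Real.pi / 2) ≤ φ)
    (hφ : φ ≤ Real.pi / 2) : 0 ≤ ((r : ℂ) * exp (φ * I)).re := by
  rw [re_ofReal_mul, exp_ofReal_mul_I_re]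
  exact mul_nonneg hr (Real.cos_nonneg_of_neg_pi_div_two_le_of_le hφ₀ hφ)

theorem Complex.norm_ofReal_mul_exp {r : ℝ} (hr : 0 ≤ r) (φ : ℝ) :
    ‖(r : ℂ) * exp (φ * I)‖ = r := by
  rw [norm_mul, norm_exp_ofReal_mul_I, mul_one, norm_real, Real.norm_of_nonneg hr]

theorem one_le_pi_sq_div_two : 1 ≤ Real.pi ^ 2 / 2 := by
  nlinarith [Real.pi_gt_three]

/-- Boundedness of `∑ (1-|z_n|²)/|ζ-z_n|²` (i.e. of `|B'(ζ)|`) on the lower right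
quarter-arc, for a Blaschke sequence in the upper half-disk having an angular
derivative at `1`. -/
theorem blaschke_deriv_bounded_on_lower_arc (z : ℕ → ℂ) (r φ : ℕ → ℝ)
    (hpol : ∀ n, z n = (r n : ℂ) * Complex.exp (φ n * Complex.I))
    (him : ∀ n, 0 < (z n).im)
    (hr : ∀ n, 1/2 ≤ r n) (hr1 : ∀ n, r n < 1)
    (hφ0 : ∀ n, 0 < φ n) (hφ : ∀ n, φ n ≤ Real.pi / 2)
    (hsum : Summable fun n => (1 - ‖z n‖ ^ 2) / ‖1 - z n‖ ^ 2)
    (t : ℝ) (ht0 : -(Real.pi / 2) ≤ t) (ht : t < 0) :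
    (Summable fun n =>
        (1 - ‖z n‖ ^ 2) / ‖Complex.exp (t * Complex.I) - z n‖ ^ 2) ∧
      ∑' n, (1 - ‖z n‖ ^ 2) / ‖Complex.exp (t * Complex.I) - z n‖ ^ 2 ≤
        Real.pi ^ 2 / 2 *
          ∑' n, (1 - ‖z n‖ ^ 2) / ‖1 - z n‖ ^ 2 := by
  have hr₀ n : 0 ≤ r n := by linarith [hr n]
  have hnorm n : ‖z n‖ = r n := by rw [hpol n, norm_ofReal_mul_exp (hr₀ n)]
  have hnum n : 0 ≤ 1 - ‖z n‖ ^ 2 := by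
    rw [hnorm n]; nlinarith [hr₀ n, hr1 n]
  have hdist n : ‖1 - z n‖ ≤ ‖exp (t * I) - z n‖ := by
    refine norm_one_sub_le_norm_sub ?_ (him n).le (norm_exp_ofReal_mul_I t) ?_
    · rw [hpol n]
      exact re_ofReal_mul_exp_nonneg (hr₀ n) (by linarith [hφ0 n, Real.pi_pos]) (hφ n)
    · rw [exp_ofReal_mul_I_im]
      exact Real.sin_nonpos_of_nonpos_of_neg_pi_le ht.le (by linarith [Real.pi_pos])
  have hdist_one_pos n : 0 < ‖1 - z n‖ :=
    norm_pos_iff.2 (sub_ne_zero.2 fun h => (hr1 n).ne (by rw [← hnorm n, ← h, norm_one]))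
  have hterm n : (1 - ‖z n‖ ^ 2) / ‖exp (t * I) - z n‖ ^ 2 ≤ (1 - ‖z n‖ ^ 2) / ‖1 - z n‖ ^ 2 :=
    div_le_div_of_nonneg_left (hnum n) (pow_pos (hdist_one_pos n) 2)
      (pow_le_pow_left₀ (norm_nonneg _) (hdist n) 2)
  have hS := hsum.of_nonneg_of_le (fun n => div_nonneg (hnum n) (by positivity)) hterm
  refine ⟨hS, (hS.tsum_le_tsum hterm hsum).trans ?_⟩
  exact le_mul_of_one_le_left (tsum_nonneg fun n => div_nonneg (hnum n) (by positivity))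
    one_le_pi_sq_div_two
end

section
/- Fix $c<0$, and with $z_k$ as in Example 2 (images in $\mathbb{D}$ of $\zeta_k=-i(c-2\pi ik)^2$ under $\zeta\mapsto(\zeta-1)/(\zeta+1)$), let $\widetilde{\mathcal{E}}=\{e^{it}:-\pi<t<0\}$. Then $\omega_{z_k}(\widetilde{\mathcal{E}})\cdot\log\frac{1}{1-|z_k|}\to 0$ as $k\to\infty$. -/
/-!
For `w` in the upper half of the disc and `t ∈ (-π, 0)`, `|e^{it} - w| ≥ Im w + |sin t|`, so by
Jordan's inequality `sin s ≥ 2s/π` on `[0, π/2]` the Poisson integral over the lower arc is at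
most `(1 - |w|²) / (2 Im w)`. For `w = (ζ - 1)/(ζ + 1)` this bound is `Re ζ / Im ζ`, which for
`ζ_k = -i(c - 2πik)²` is `-4πck / (4π²k² - c²) = O(1/k)`, while
`log (1/(1 - |w|)) ≤ 2 log (|ζ| + 1) = O(log k)`.
-/

open Complex MeasureTheory Set Filter
open scoped Real

theorem integral_inv_add_mul_sq_le {a b : ℝ} (ha : 0 < a) (hb : 0 < b) {l : ℝ} (hl : 0 ≤ l) :
    ∫ t in 0..l, ((b + a * t) ^ 2)⁻¹ ≤ (a * b)⁻¹ := by
  have hpos : ∀ t ∈ uIcc 0 l, 0 < b + a * t := fun t ht => by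
    rw [uIcc_of_le hl] at ht
    nlinarith [ht.1]
  have hderiv : ∀ t ∈ uIcc 0 l,
      HasDerivAt (fun t => -a⁻¹ * (b + a * t)⁻¹) ((b + a * t) ^ 2)⁻¹ t := fun t ht => by
    have h := (((hasDerivAt_id t).const_mul a).const_add b).inv (hpos t ht).ne'
    refine (h.const_mul (-a⁻¹)).congr_deriv ?_
    simp only [id, mul_one]
    field_simp
  have hcont : ContinuousOn (fun t => ((b + a * t) ^ 2)⁻¹) (uIcc 0 l) :=
    (continuousOn_const.add (continuousOn_const.mul continuousOn_id)).pow 2 |>.inv₀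
      fun t ht => (pow_pos (hpos t ht) 2).ne'
  rw [intervalIntegral.integral_eq_sub_of_hasDerivAt hderiv hcont.intervalIntegrable]
  have : 0 ≤ a⁻¹ * (b + a * l)⁻¹ := by
    have := hpos l right_mem_uIcc
    positivity
  simp only [mul_zero, add_zero, mul_inv]
  linarith

theorem integral_inv_add_abs_sin_sq_le {b : ℝ} (hb : 0 < b) :
    ∫ t in 0..π, ((b + |Real.sin t|) ^ 2)⁻¹ ≤ π / b := by
  set g : ℝ → ℝ := fun t => ((b + |Real.sin t|) ^ 2)⁻¹
  have hg : Continuous g :=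
    Continuous.inv₀ (by fun_prop) fun t => by positivity
  have hhalf : ∫ t in 0..π / 2, g t ≤ π / (2 * b) := calc
    ∫ t in 0..π / 2, g t ≤ ∫ t in 0..π / 2, ((b + 2 / π * t) ^ 2)⁻¹ := by
      refine intervalIntegral.integral_mono_on (by positivity) (hg.intervalIntegrable _ _)
        ?_ fun t ht => ?_
      · refine ContinuousOn.intervalIntegrable (ContinuousOn.inv₀ (by fun_prop) fun t ht => ?_)
        rw [uIcc_of_le (by positivity)] at ht
        have := ht.1
        positivity
      have hsin := Real.mul_le_sin ht.1 ht.2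
      have : 0 ≤ 2 / π * t := by have := ht.1; positivity
      simp only [g, abs_of_nonneg (this.trans hsin)]
      gcongr
    _ ≤ (2 / π * b)⁻¹ := integral_inv_add_mul_sq_le (by positivity) hb (by positivity)
    _ = π / (2 * b) := by field_simp
  have hsymm : ∫ t in π / 2..π, g t = ∫ t in 0..π / 2, g t := by
    have h := intervalIntegral.integral_comp_sub_left (a := π / 2) (b := π) g π
    simp only [g, Real.sin_pi_sub, sub_self, show π - π / 2 = π / 2 by ring] at h
    exact h
  rw [← intervalIntegral.integral_add_adjacent_intervals (hg.intervalIntegrable 0 (π / 2))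
    (hg.intervalIntegrable _ _), hsymm]
  calc _ ≤ π / (2 * b) + π / (2 * b) := add_le_add hhalf hhalf
    _ = π / b := by field_simp; ring

noncomputable def lowerArcHarmonicMeasure (w : ℂ) : ℝ :=
  (2 * π)⁻¹ * ∫ t in Ioo (-π) 0, (1 - ‖w‖ ^ 2) / ‖exp (t * I) - w‖ ^ 2

theorem lowerArcHarmonicMeasure_nonneg {w : ℂ} (hw : ‖w‖ ≤ 1) :
    0 ≤ lowerArcHarmonicMeasure w := by
  have : 0 ≤ 1 - ‖w‖ ^ 2 := by nlinarith [norm_nonneg w]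
  unfold lowerArcHarmonicMeasure
  have := Real.pi_pos
  exact mul_nonneg (by positivity) (setIntegral_nonneg measurableSet_Ioo fun t _ => by positivity)

theorem lowerArcHarmonicMeasure_le {w : ℂ} (hw : ‖w‖ ≤ 1) (hb : 0 < w.im) :
    lowerArcHarmonicMeasure w ≤ (1 - ‖w‖ ^ 2) / (2 * w.im) := by
  set N := 1 - ‖w‖ ^ 2
  have hN : 0 ≤ N := by nlinarith [norm_nonneg w]
  set g : ℝ → ℝ := fun t => ((w.im + |Real.sin t|) ^ 2)⁻¹
  have hg : Continuous g := Continuous.inv₀ (by fun_prop) fun t => by positivity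
  -- on the lower arc `|exp (t I) - w| ≥ |Im (exp (t I) - w)| = w.im + |sin t|`
  have hpt : ∀ t ∈ Ioo (-π) 0, N / ‖exp (t * I) - w‖ ^ 2 ≤ N * g t := fun t ht => by
    have hsin : Real.sin t < 0 := Real.sin_neg_of_neg_of_neg_pi_lt ht.2 ht.1
    have him : w.im + |Real.sin t| ≤ ‖exp (t * I) - w‖ := by
      have := abs_im_le_norm (exp (t * I) - w)
      rw [sub_im, exp_ofReal_mul_I_im, abs_sub_comm, abs_of_pos (by linarith)] at this
      rwa [abs_of_neg hsin, ← sub_eq_add_neg]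
    rw [← div_eq_mul_inv]
    gcongr
  have hint : ∫ t in Ioo (-π) 0, g t = ∫ t in 0..π, g t := by
    rw [← integral_Ioc_eq_integral_Ioo,
      ← intervalIntegral.integral_of_le (by linarith [Real.pi_pos])]
    simpa [g] using (intervalIntegral.integral_comp_neg (a := 0) (b := π) g).symm
  have := Real.pi_pos
  calc lowerArcHarmonicMeasure w ≤ (2 * π)⁻¹ * ∫ t in Ioo (-π) 0, N * g t := by
        refine mul_le_mul_of_nonneg_left (integral_mono_of_nonneg ?_ ?_ ?_) (by positivity)
        · exact ae_restrict_of_forall_mem measurableSet_Ioo fun t _ => by positivity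
        · exact (hg.const_mul N).integrableOn_Icc.mono_set Ioo_subset_Icc_self
        · exact ae_restrict_of_forall_mem measurableSet_Ioo hpt
    _ = (2 * π)⁻¹ * (N * ∫ t in 0..π, g t) := by rw [integral_const_mul, hint]
    _ ≤ (2 * π)⁻¹ * (N * (π / w.im)) := by gcongr; exact integral_inv_add_abs_sin_sq_le hb
    _ = N / (2 * w.im) := by field_simp

noncomputable def cayley (ζ : ℂ) : ℂ := (ζ - 1) / (ζ + 1)

theorem im_cayley (ζ : ℂ) : (cayley ζ).im = 2 * ζ.im / normSq (ζ + 1) := by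
  simp only [cayley, div_im, sub_im, add_im, sub_re, add_re, one_im, one_re]
  ring

theorem one_sub_sq_norm_cayley {ζ : ℂ} (hζ : ζ + 1 ≠ 0) :
    1 - ‖cayley ζ‖ ^ 2 = 4 * ζ.re / normSq (ζ + 1) := by
  rw [cayley, ← normSq_eq_norm_sq, normSq_div, one_sub_div (normSq_pos.mpr hζ).ne']
  simp only [normSq_apply, sub_re, add_re, sub_im, add_im, one_re, one_im]
  ring

theorem add_one_ne_zero_of_re_pos {ζ : ℂ} (hre : 0 < ζ.re) : ζ + 1 ≠ 0 := fun h => by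
  have := congrArg re h
  simp only [add_re, one_re, zero_re] at this
  linarith

theorem norm_cayley_lt_one {ζ : ℂ} (hre : 0 < ζ.re) : ‖cayley ζ‖ < 1 := by
  have h := one_sub_sq_norm_cayley (add_one_ne_zero_of_re_pos hre)
  have : 0 < 4 * ζ.re / normSq (ζ + 1) :=
    div_pos (by positivity) (normSq_pos.mpr (add_one_ne_zero_of_re_pos hre))
  nlinarith [norm_nonneg (cayley ζ)]

theorem lowerArcHarmonicMeasure_cayley_le {ζ : ℂ} (hre : 0 < ζ.re) (him : 0 < ζ.im) :
    lowerArcHarmonicMeasure (cayley ζ) ≤ ζ.re / ζ.im := by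
  have hN := normSq_pos.mpr (add_one_ne_zero_of_re_pos hre)
  refine (lowerArcHarmonicMeasure_le (norm_cayley_lt_one hre).le
    (by rw [im_cayley]; positivity)).trans_eq ?_
  rw [one_sub_sq_norm_cayley (add_one_ne_zero_of_re_pos hre), im_cayley]
  field_simp
  ring

theorem log_inv_one_sub_norm_cayley_le {ζ : ℂ} (hre : 1 / 2 ≤ ζ.re) :
    Real.log (1 / (1 - ‖cayley ζ‖)) ≤ 2 * Real.log (‖ζ‖ + 1) := by
  have hre' : 0 < ζ.re := by linarith
  have hr := norm_cayley_lt_one hre'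
  have hN := normSq_pos.mpr (add_one_ne_zero_of_re_pos hre')
  have h := one_sub_sq_norm_cayley (add_one_ne_zero_of_re_pos hre')
  -- `1 - r ≥ (1 - r ^ 2) / 2 = 2 Re ζ / |ζ + 1| ^ 2 ≥ 1 / |ζ + 1| ^ 2`
  have hlow : 1 / normSq (ζ + 1) ≤ 1 - ‖cayley ζ‖ := by
    have : 1 / normSq (ζ + 1) ≤ (1 - ‖cayley ζ‖ ^ 2) / 2 := by
      rw [h, div_div, div_le_div_iff₀ hN (by positivity)]
      nlinarith
    nlinarith [norm_nonneg (cayley ζ)]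
  have hup : normSq (ζ + 1) ≤ (‖ζ‖ + 1) ^ 2 := by
    rw [normSq_eq_norm_sq]
    gcongr
    exact (norm_add_le _ _).trans_eq (by simp)
  calc Real.log (1 / (1 - ‖cayley ζ‖)) ≤ Real.log ((‖ζ‖ + 1) ^ 2) := by
        refine Real.log_le_log (by simp; linarith) ?_
        exact ((one_div_le (sub_pos.mpr hr) hN).mpr hlow).trans hup
    _ = 2 * Real.log (‖ζ‖ + 1) := by rw [Real.log_pow]; norm_num

theorem tendsto_add_mul_log_div_atTop (a b : ℝ) :
    Tendsto (fun x => (a + b * Real.log x) / x) atTop (nhds 0) := by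
  have hlog := Real.tendsto_pow_log_div_mul_add_atTop 1 0 1 one_ne_zero
  simp only [pow_one, one_mul, add_zero] at hlog
  have h := (tendsto_inv_atTop_zero.const_mul a).add (hlog.const_mul b)
  rw [mul_zero, mul_zero, add_zero] at h
  exact h.congr fun x => by ring

theorem re_neg_I_mul_sub_mul_I_sq (c x : ℝ) : (-I * (c - x * I) ^ 2).re = -2 * c * x := by
  simp [sq]
  ring

theorem im_neg_I_mul_sub_mul_I_sq (c x : ℝ) : (-I * (c - x * I) ^ 2).im = x ^ 2 - c ^ 2 := by
  simp [sq]

theorem norm_neg_I_mul_sub_mul_I_sq (c x : ℝ) : ‖-I * (c - x * I) ^ 2‖ = c ^ 2 + x ^ 2 := by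
  rw [norm_mul, norm_neg, norm_I, one_mul, norm_pow, ← normSq_eq_norm_sq]
  simp [normSq_apply]
  ring

theorem example2_term_mem_Icc {c x : ℝ} (hc : c < 0) (hx : 1 ≤ x) (hxc : -2 * c ≤ x)
    (hre : 1 / 2 ≤ -2 * c * x) :
    lowerArcHarmonicMeasure (cayley (-I * (c - x * I) ^ 2)) *
        Real.log (1 / (1 - ‖cayley (-I * (c - x * I) ^ 2)‖)) ∈
      Icc 0 (-8 * c * ((Real.log (c ^ 2 + 2) + 2 * Real.log x) / x)) := by
  set ζ := -I * (c - x * I) ^ 2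
  have hζre : ζ.re = -2 * c * x := re_neg_I_mul_sub_mul_I_sq c x
  have hζim : ζ.im = x ^ 2 - c ^ 2 := im_neg_I_mul_sub_mul_I_sq c x
  have hζnorm : ‖ζ‖ = c ^ 2 + x ^ 2 := norm_neg_I_mul_sub_mul_I_sq c x
  have hre₀ : 0 < ζ.re := by linarith
  have him : 0 < ζ.im := by nlinarith
  have hω := lowerArcHarmonicMeasure_nonneg (norm_cayley_lt_one hre₀).le
  have hL : 0 ≤ Real.log (1 / (1 - ‖cayley ζ‖)) :=
    Real.log_nonneg (one_le_one_div (by linarith [norm_cayley_lt_one hre₀]) (by simp))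
  have hratio : ζ.re / ζ.im ≤ -4 * c / x := by
    rw [hζre, hζim, div_le_div_iff₀ (by nlinarith) (by linarith)]
    nlinarith
  have hlog : Real.log (‖ζ‖ + 1) ≤ Real.log (c ^ 2 + 2) + 2 * Real.log x := by
    have h2 : 2 * Real.log x = Real.log (x ^ 2) := by rw [Real.log_pow]; norm_num
    rw [hζnorm, h2, ← Real.log_mul (by positivity) (by positivity)]
    have hx2 : 0 ≤ x ^ 2 - 1 := by nlinarith
    exact Real.log_le_log (by positivity) (by nlinarith [mul_nonneg (sq_nonneg c) hx2])
  refine ⟨mul_nonneg hω hL, ?_⟩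
  calc _ ≤ ζ.re / ζ.im * (2 * Real.log (‖ζ‖ + 1)) :=
        mul_le_mul (lowerArcHarmonicMeasure_cayley_le hre₀ him)
          (log_inv_one_sub_norm_cayley_le (by linarith)) hL (by positivity)
    _ ≤ -4 * c / x * (2 * (Real.log (c ^ 2 + 2) + 2 * Real.log x)) := by
        have := Real.log_nonneg (by linarith [norm_nonneg ζ] : 1 ≤ ‖ζ‖ + 1)
        exact mul_le_mul hratio (by linarith) (by positivity)
          (div_nonneg (by linarith) (by linarith))
    _ = -8 * c * ((Real.log (c ^ 2 + 2) + 2 * Real.log x) / x) := by ring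

/-- In Example 2, the harmonic measure of the lower semicircle seen from `z_k`,
multiplied by `log(1/(1-|z_k|))`, tends to `0`. -/
theorem example2_firstcond (c : ℝ) (hc : c < 0)
    (ζ : ℕ → ℂ)
    (hζ : ζ = fun (k : ℕ) => -Complex.I * ((c : ℂ) - 2 * Real.pi * Complex.I * (k : ℂ)) ^ 2)
    (z : ℕ → ℂ) (hz : z = fun k => (ζ k - 1) / (ζ k + 1))
    (ω : ℕ → ℝ)
    (hω : ω = fun k => (2 * Real.pi)⁻¹ *
      ∫ t in Ioo (-Real.pi) 0,
        (1 - ‖z k‖ ^ 2) /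
          ‖Complex.exp (t * Complex.I) - z k‖ ^ 2) :
    Tendsto (fun k => ω k * Real.log (1 / (1 - ‖z k‖))) atTop (nhds 0) := by
  have hx : Tendsto (fun k : ℕ => 2 * π * (k : ℝ)) atTop atTop :=
    tendsto_natCast_atTop_atTop.const_mul_atTop (by positivity)
  have hωk : ∀ k, ω k = lowerArcHarmonicMeasure (z k) := fun k => by rw [hω]; rfl
  have hzk : ∀ k : ℕ, z k = cayley (-I * (c - (2 * π * k : ℝ) * I) ^ 2) := fun k => by
    rw [hz, hζ, cayley]
    push_cast
    ring_nf
  have hbound : ∀ᶠ k : ℕ in atTop, ω k * Real.log (1 / (1 - ‖z k‖)) ∈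
      Icc 0 (-8 * c * ((Real.log (c ^ 2 + 2) + 2 * Real.log (2 * π * k)) / (2 * π * k))) := by
    filter_upwards [hx.eventually_ge_atTop 1, hx.eventually_ge_atTop (-2 * c),
      (hx.const_mul_atTop (by linarith : 0 < -2 * c)).eventually_ge_atTop (1 / 2)]
      with k h₁ h₂ h₃
    rw [hωk, hzk k]
    exact example2_term_mem_Icc hc h₁ h₂ h₃
  have hlim :=
    ((tendsto_add_mul_log_div_atTop (Real.log (c ^ 2 + 2)) 2).const_mul (-8 * c)).comp hx
  rw [mul_zero] at hlim
  exact tendsto_of_tendsto_of_tendsto_of_le_of_le' tendsto_const_nhds hlim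
    (hbound.mono fun _ h => h.1) (hbound.mono fun _ h => h.2)
end
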